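/- arXiv:2201.02720 — 2 statements merged into one kernel-verified Lean document; each statement's English description precedes it below -/
import Mathlib

section
/- Let M be a real symmetric n×n matrix with n ≥ 3, and let T be a set of at least three indices such that for all distinct u, v ∈ T, the vector e_u - e_v is an eigenvector of M for a common eigenvalue θ. Then for every u ∈ T and every real t, U(t)_{u,u} ≠ 0, where U(t) = exp(itM). -/
open Matrix Complex

/-- The continuous-time quantum walk transition matrix `U(t) = exp(i t M)`. -/
noncomputable def transU {n : ℕ} (M : Matrix (Fin n) (Fin n) ℝ) (t : ℝ) :
    Matrix (Fin n) (Fin n) ℂ :=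
  NormedSpace.exp ((Complex.I * (t : ℂ)) • M.map (fun x => (x : ℂ)))

/-!
Pushing the eigenvector `e_u - e_v` of `M` through the exponential series gives
`U(t)_{u,u} - U(t)_{u,v} = e^{itθ}` for all distinct twins `u, v`. If `U(t)_{u,u} = 0`, every
entry `U(t)_{u,v}` with `v ∈ T \ {u}` therefore has modulus one; as `|T| ≥ 3` there are two such
entries, so row `u` of the unitary matrix `U(t)` would have squared norm at least `2`.
-/

namespace Matrix

variable {m 𝕂 : Type*} [Fintype m]

theorem map_ofReal_mulVec_of_mulVec_eq_smul {M : Matrix m m ℝ} {y : m → ℝ} {θ : ℝ}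
    (h : M *ᵥ y = θ • y) : M.map ofReal *ᵥ (ofReal ∘ y) = (θ : ℂ) • (ofReal ∘ y) := by
  ext i
  calc (M.map ofReal *ᵥ (ofReal ∘ y)) i = ofRealHom ((M *ᵥ y) i) :=
        (RingHom.map_mulVec ofRealHom M y i).symm
    _ = _ := by simp [h]

variable [DecidableEq m] [RCLike 𝕂]

theorem exp_mulVec_of_mulVec_eq_smul {A : Matrix m m 𝕂} {x : m → 𝕂} {μ : 𝕂}
    (hx : A *ᵥ x = μ • x) : NormedSpace.exp A *ᵥ x = NormedSpace.exp μ • x := by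
  open scoped Norms.Operator in
  have hpow (k : ℕ) : A ^ k *ᵥ x = μ ^ k • x := by
    induction k with
    | zero => simp
    | succ k ih => rw [pow_succ', ← mulVec_mulVec, ih, mulVec_smul, hx, smul_smul, pow_succ]
  have hA := (NormedSpace.exp_series_hasSum_exp' (𝕂 := 𝕂) A).map ((mulVecBilin 𝕂 𝕂).flip x)
    (continuous_id.matrix_mulVec continuous_const)
  have hμ := (NormedSpace.exp_series_hasSum_exp' (𝕂 := 𝕂) μ).smul_const x
  refine hA.unique ?_
  simpa [Function.comp_def, smul_mulVec, hpow, smul_smul] using hμ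

theorem exp_mul_conjTranspose_self_of_conjTranspose_eq_neg {A : Matrix m m 𝕂} (hA : Aᴴ = -A) :
    NormedSpace.exp A * (NormedSpace.exp A)ᴴ = 1 := by
  rw [← exp_conjTranspose, hA, ← exp_add_of_commute _ _ (Commute.refl A).neg_right,
    add_neg_cancel, NormedSpace.exp_zero]

theorem sum_norm_sq_row_of_mem_unitaryGroup {U : Matrix m m 𝕂} (hU : U ∈ unitaryGroup m 𝕂)
    (i : m) : ∑ j, ‖U i j‖ ^ 2 = 1 := by
  have hdiag := congrFun (congrFun (mem_unitaryGroup_iff.mp hU) i) i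
  simp only [mul_apply, star_apply, ← starRingEnd_apply, RCLike.mul_conj, one_apply_eq] at hdiag
  exact_mod_cast hdiag

end Matrix

section transU

variable {n : ℕ} {M : Matrix (Fin n) (Fin n) ℝ}

theorem transU_mem_unitaryGroup (hM : M.IsSymm) (t : ℝ) :
    transU M t ∈ unitaryGroup (Fin n) ℂ := by
  refine mem_unitaryGroup_iff.mpr (exp_mul_conjTranspose_self_of_conjTranspose_eq_neg ?_)
  ext i j
  simp [hM.apply i j]

theorem transU_apply_sub_apply_of_mulVec_eq_smul {u v : Fin n} (huv : u ≠ v) {θ : ℝ}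
    (h : M *ᵥ (Pi.single u 1 - Pi.single v 1) = θ • (Pi.single u 1 - Pi.single v 1)) (t : ℝ) :
    transU M t u u - transU M t u v = exp (I * (t * θ : ℝ)) := by
  have hsingle (i : Fin n) : ofReal ∘ (Pi.single i 1 : Fin n → ℝ) = Pi.single i 1 := by
    ext j; by_cases hj : j = i <;> simp [hj]
  have hx := map_ofReal_mulVec_of_mulVec_eq_smul h
  rw [ofReal_comp_sub, hsingle, hsingle] at hx
  have hU := exp_mulVec_of_mulVec_eq_smul (A := (I * (t : ℂ)) • M.map ofReal)
    (μ := I * (t * θ : ℝ)) (by rw [smul_mulVec, hx, smul_smul]; push_cast; ring_nf)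
  simpa [transU, mulVec_sub, mulVec_single_one, huv.symm, ← exp_eq_exp_ℂ] using congrFun hU u

end transU

theorem stmt3_general {n : ℕ} (M : Matrix (Fin n) (Fin n) ℝ) (hM : M.IsSymm)
    (T : Finset (Fin n)) (hT : 3 ≤ T.card) (θ : ℝ)
    (htwin : ∀ u ∈ T, ∀ v ∈ T, u ≠ v →
      M *ᵥ (Pi.single u 1 - Pi.single v 1) = θ • (Pi.single u 1 - Pi.single v 1)) :
    ∀ u ∈ T, ∀ t : ℝ, transU M t u u ≠ 0 := by
  intro u hu t hzero
  have hnorm : ∀ z ∈ T.erase u, ‖transU M t u z‖ ^ 2 = 1 := by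
    intro z hz
    obtain ⟨hzu, hzT⟩ := Finset.mem_erase.mp hz
    have := transU_apply_sub_apply_of_mulVec_eq_smul hzu.symm (htwin u hu z hzT hzu.symm) t
    rw [hzero, zero_sub, neg_eq_iff_eq_neg] at this
    rw [this, norm_neg, norm_exp_I_mul_ofReal, one_pow]
  obtain ⟨v, hv, w, hw, hvw⟩ :=
    Finset.one_lt_card.mp (by rw [Finset.card_erase_of_mem hu]; omega : 1 < (T.erase u).card)
  have hpair := Finset.sum_le_sum_of_subset_of_nonneg (f := fun j ↦ ‖transU M t u j‖ ^ 2)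
    (Finset.subset_univ {v, w}) fun _ _ _ ↦ by positivity
  rw [Finset.sum_pair hvw, hnorm v hv, hnorm w hw,
    sum_norm_sq_row_of_mem_unitaryGroup (transU_mem_unitaryGroup hM t)] at hpair
  norm_num at hpair

theorem stmt3 {n : ℕ} (hn : 3 ≤ n) (M : Matrix (Fin n) (Fin n) ℝ) (hM : M.IsSymm)
    (T : Finset (Fin n)) (hT : 3 ≤ T.card) (θ : ℝ)
    (htwin : ∀ u ∈ T, ∀ v ∈ T, u ≠ v →
      M *ᵥ (Pi.single u 1 - Pi.single v 1) = θ • (Pi.single u 1 - Pi.single v 1)) :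
    ∀ u ∈ T, ∀ t : ℝ, transU M t u u ≠ 0 :=
  stmt3_general M hM T hT θ htwin
end

section
/- For every n ≥ 3 and n-1 = λ, the inequality (1 - 1/(8n⁴λ⁴))² ≥ 1/(n-1) holds strictly; consequently, in the complete graph K_n with n ≥ 3, there is no time τ and pair of distinct vertices u, v with |U(τ)_{u,v}| ≥ 1 - 1/(8n⁴(n-1)⁴), where U(t) = exp(it A(K_n)). -/
/-!
Writing `P = J / n` for the projection onto the constant vectors, `A(Kₙ) = n P - 1`, so
`U(t) = e^{-it} (1 - P + e^{int} P)`. An off-diagonal entry is therefore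
`e^{-it} (e^{int} - 1) / n`, of modulus at most `2 / n ≤ 2 / 3`, whereas for `n ≥ 3` the
threshold `1 - 1 / (8 n⁴ (n - 1)⁴)` is at least `7 / 8`.
-/

open Matrix Complex

/-- The all-ones matrix. -/
def allOnes (m : ℕ) (R : Type*) [One R] : Matrix (Fin m) (Fin m) R :=
  Matrix.of fun _ _ => 1

theorem IsIdempotentElem.exp_smul {𝕂 𝔸 : Type*} [RCLike 𝕂] [NormedRing 𝔸] [NormedAlgebra 𝕂 𝔸]
    [CompleteSpace 𝔸] {p : 𝔸} (hp : IsIdempotentElem p) (a : 𝕂) :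
    NormedSpace.exp (a • p) = 1 - p + NormedSpace.exp a • p := by
  have hseries : HasSum
      (fun k : ℕ => (if k = 0 then 1 - p else 0) + ((k.factorial⁻¹ : 𝕂) • a ^ k) • p)
      (1 - p + NormedSpace.exp a • p) :=
    (hasSum_ite_eq 0 (1 - p)).add ((NormedSpace.exp_series_hasSum_exp' a).smul_const p)
  refine (NormedSpace.exp_series_hasSum_exp' (𝕂 := 𝕂) (a • p)).unique ?_
  -- termwise, `(a • p) ^ k = a ^ k • p` except at `k = 0`, where `1 - p` makes up the difference
  convert hseries using 2 with k
  rcases k with _ | k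
  · simp
  · rw [smul_pow, hp.pow_succ_eq, smul_assoc]
    simp

theorem allOnes_mul_allOnes (m : ℕ) (R : Type*) [NonAssocSemiring R] :
    allOnes m R * allOnes m R = (m : R) • allOnes m R := by
  ext i j
  simp [allOnes, Matrix.mul_apply]

theorem isIdempotentElem_inv_smul_allOnes {m : ℕ} {K : Type*} [Field K] (hm : (m : K) ≠ 0) :
    IsIdempotentElem ((m : K)⁻¹ • allOnes m K) := by
  rw [IsIdempotentElem, smul_mul_smul_comm, allOnes_mul_allOnes, smul_smul, mul_assoc,
    inv_mul_cancel₀ hm, mul_one]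

theorem allOnes_sub_one_map_ofReal (m : ℕ) :
    (allOnes m ℝ - 1).map (fun x => (x : ℂ)) = allOnes m ℂ - 1 := by
  ext i j
  by_cases h : i = j <;> simp [allOnes, h]

open scoped Matrix.Norms.Operator in
theorem transU_allOnes_sub_one {m : ℕ} (hm : m ≠ 0) (t : ℝ) :
    transU (allOnes m ℝ - 1) t = Complex.exp (-(I * t)) •
      (1 - (m : ℂ)⁻¹ • allOnes m ℂ + Complex.exp (I * t * m) • (m : ℂ)⁻¹ • allOnes m ℂ) := by
  have hm' : (m : ℂ) ≠ 0 := Nat.cast_ne_zero.mpr hm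
  set P := (m : ℂ)⁻¹ • allOnes m ℂ
  have hP : IsIdempotentElem P := isIdempotentElem_inv_smul_allOnes hm'
  have hsplit : (I * t) • (allOnes m ℂ - 1) = (I * t * m) • P + (-(I * t)) • 1 := by
    rw [smul_smul, mul_assoc, mul_inv_cancel₀ hm', mul_one, smul_sub, neg_smul, sub_eq_add_neg]
  -- restated so that `exp` carries the default matrix instances, not the operator-norm ones
  have hdiag : NormedSpace.exp ((-(I * t)) • (1 : Matrix (Fin m) (Fin m) ℂ)) =
      NormedSpace.exp (-(I * t)) • 1 :=
    (IsIdempotentElem.one.exp_smul _).trans (by rw [sub_self, zero_add])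
  have hproj : NormedSpace.exp ((I * t * m) • P) = 1 - P + NormedSpace.exp (I * t * m) • P :=
    hP.exp_smul _
  rw [transU, allOnes_sub_one_map_ofReal, hsplit,
    Matrix.exp_add_of_commute _ _ ((Commute.one_right _).smul_right _), hproj, hdiag,
    mul_smul_one, ← Complex.exp_eq_exp_ℂ]

theorem transU_allOnes_sub_one_apply {m : ℕ} (t : ℝ) {u v : Fin m} (huv : u ≠ v) :
    transU (allOnes m ℝ - 1) t u v =
      Complex.exp (-(I * t)) * (Complex.exp (I * t * m) - 1) / m := by
  have hm : m ≠ 0 := by rintro rfl; exact u.elim0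
  rw [transU_allOnes_sub_one hm]
  simp only [allOnes, smul_of, Matrix.smul_apply, Matrix.add_apply, Matrix.sub_apply,
    Matrix.one_apply_ne huv, of_apply, Pi.smul_apply, smul_eq_mul, mul_one, zero_sub]
  ring

theorem norm_transU_allOnes_sub_one_apply_le {m : ℕ} (t : ℝ) {u v : Fin m} (huv : u ≠ v) :
    ‖transU (allOnes m ℝ - 1) t u v‖ ≤ 2 / m := by
  rw [transU_allOnes_sub_one_apply t huv, norm_div, norm_mul, Complex.norm_natCast]
  gcongr
  calc ‖Complex.exp (-(I * t))‖ * ‖Complex.exp (I * t * m) - 1‖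
      = ‖Complex.exp (I * t * m) - 1‖ := by
        rw [Complex.norm_exp]; simp
    _ ≤ ‖Complex.exp (I * t * m)‖ + ‖(1 : ℂ)‖ := norm_sub_le _ _
    _ = 2 := by rw [Complex.norm_exp]; norm_num

theorem one_div_eight_mul_pow_four_le {x : ℝ} (hx : 2 ≤ x) :
    1 / (8 * x ^ 4 * (x - 1) ^ 4) ≤ 1 / 8 := by
  have hx4 : 1 ≤ x ^ 4 := one_le_pow₀ (by linarith)
  have hx14 : 1 ≤ (x - 1) ^ 4 := one_le_pow₀ (by linarith)
  exact one_div_le_one_div_of_le (by norm_num) (by nlinarith)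

theorem stmt9 {n : ℕ} (hn : 3 ≤ n)
    (A : Matrix (Fin n) (Fin n) ℝ) (hA : A = allOnes n ℝ - 1) :
    (1 - 1 / (8 * (n : ℝ) ^ 4 * ((n : ℝ) - 1) ^ 4)) ^ 2 > 1 / ((n : ℝ) - 1) ∧
    ¬∃ (τ : ℝ) (u v : Fin n), u ≠ v ∧
        1 - 1 / (8 * (n : ℝ) ^ 4 * ((n : ℝ) - 1) ^ 4) ≤ ‖transU A τ u v‖ := by
  subst hA
  have hn' : (3 : ℝ) ≤ n := by exact_mod_cast hn
  have hε := one_div_eight_mul_pow_four_le (x := n) (by linarith)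
  constructor
  · have h : 1 / ((n : ℝ) - 1) ≤ 1 / 2 := one_div_le_one_div_of_le (by norm_num) (by linarith)
    nlinarith
  · rintro ⟨τ, u, v, huv, hle⟩
    have hentry := norm_transU_allOnes_sub_one_apply_le τ huv
    have h : (2 : ℝ) / n ≤ 2 / 3 := div_le_div_of_nonneg_left (by norm_num) (by norm_num) hn'
    linarith
end
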